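/- Let n ≥ 3 be an integer and let h be a field of symmetric n×n matrices on ℝⁿ whose entries are homogeneous quadratic polynomials that is trace-free and satisfies ∑_{j=1}^n x_j h_{ij}(x) = 0 for all x and i. Then for every t > 0, z ∈ ℝⁿ and x ∈ ℝⁿ one has the pointwise identity ∑_{p,q=1}^n h_{pq}(x) ∂²_{pq}B_{t,z}(x) = (t^{(n−2)/2}/(n(n−2))) · (∑_{p,q=1}^n h_{pq}(x) z_p z_q) · (t² + |x−z|²/(n(n−2)))^{−(n+2)/2}. -/

import Mathlib

open MeasureTheory Real

noncomputable section

/-- The Euclidean space `ℝⁿ`. -/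
abbrev En (n : ℕ) := EuclideanSpace ℝ (Fin n)

/-- Partial derivative in the `i`-th coordinate direction. -/
noncomputable def pd {n : ℕ} (i : Fin n) (f : En n → ℝ) (x : En n) : ℝ :=
  fderiv ℝ f x (EuclideanSpace.single i 1)

/-- The standard bubble `B_{t,z}(x) = t^{(n-2)/2} (t² + |x-z|²/(n(n-2)))^{-(n-2)/2}`. -/
noncomputable def Bub (n : ℕ) (t : ℝ) (z x : En n) : ℝ :=
  t ^ (((n : ℝ) - 2) / 2) *
    (t ^ 2 + ‖x - z‖ ^ 2 / ((n : ℝ) * ((n : ℝ) - 2))) ^ (-(((n : ℝ) - 2) / 2))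


/-!
Write `ρ(y) = t² + |y - z|² / (n(n-2))` and `A = (n-2)/2`, so that `B = t^A ρ^{-A}`. The Hessian of
`B` at `x` is `a (x - z) ⊗ (x - z) + b Id` with `a = t^A A (A+1) (2/(n(n-2)))² ρ^{-A-2}`. Contracting
with `h(x)`, the identity part dies because `h` is trace-free, and `(x - z) ⊗ (x - z)` may be replaced
by `z ⊗ z` because `h(x)` is symmetric with `h(x) x = 0`. Finally `4A(A+1) = n(n-2)`.
-/

open scoped RealInnerProductSpace

section RadialRpow

variable {E : Type*} [NormedAddCommGroup E] [InnerProductSpace ℝ E] {s C e : ℝ} {z : E}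

theorem hasFDerivAt_radial_rpow {y : E} (hy : s + ‖y - z‖ ^ 2 / C ≠ 0) :
    HasFDerivAt (fun w : E => (s + ‖w - z‖ ^ 2 / C) ^ e)
      ((e * (s + ‖y - z‖ ^ 2 / C) ^ (e - 1) * (2 / C)) • innerSL ℝ (y - z)) y := by
  have hbase : HasFDerivAt (fun w : E => s + ‖w - z‖ ^ 2 / C)
      ((2 / C) • innerSL ℝ (y - z)) y := by
    have := (((hasFDerivAt_id y).sub_const z).norm_sq.const_mul C⁻¹).const_add s
    simp only [id, ContinuousLinearMap.comp_id, ← div_eq_inv_mul] at this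
    refine this.congr_fderiv ?_
    ext v
    simp only [smul_apply, innerSL_apply_apply, smul_eq_mul, nsmul_eq_mul]
    ring
  rw [mul_smul]
  exact (Real.hasDerivAt_rpow_const (Or.inl hy)).comp_hasFDerivAt y hbase

theorem fderiv_const_mul_radial_rpow_apply (c : ℝ) {y : E} (hy : s + ‖y - z‖ ^ 2 / C ≠ 0)
    (v : E) :
    fderiv ℝ (fun w : E => c * (s + ‖w - z‖ ^ 2 / C) ^ e) y v =
      c * e * (2 / C) * (s + ‖y - z‖ ^ 2 / C) ^ (e - 1) * ⟪y - z, v⟫ := by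
  rw [((hasFDerivAt_radial_rpow hy).const_mul c).fderiv]
  simp only [smul_apply, innerSL_apply_apply, smul_eq_mul]
  ring

theorem fderiv_fderiv_const_mul_radial_rpow_apply (c : ℝ) (hs : 0 < s) (hC : 0 < C)
    (x u v : E) :
    fderiv ℝ (fun y => fderiv ℝ (fun w : E => c * (s + ‖w - z‖ ^ 2 / C) ^ e) y v) x u =
      c * e * (e - 1) * (2 / C) ^ 2 * (s + ‖x - z‖ ^ 2 / C) ^ (e - 2) *
          ⟪x - z, u⟫ * ⟪x - z, v⟫ +
        c * e * (2 / C) * (s + ‖x - z‖ ^ 2 / C) ^ (e - 1) * ⟪u, v⟫ := by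
  have hpos : ∀ y : E, s + ‖y - z‖ ^ 2 / C ≠ 0 := fun y => by positivity
  simp_rw [fderiv_const_mul_radial_rpow_apply c (hpos _)]
  have hinner : HasFDerivAt (fun y : E => ⟪y - z, v⟫) (innerSL ℝ v) x := by
    refine (((hasFDerivAt_id x).sub_const z).inner ℝ (hasFDerivAt_const v x)).congr_fderiv ?_
    ext u
    simp [real_inner_comm]
  have hD : HasFDerivAt
      (fun y => c * e * (2 / C) * (s + ‖y - z‖ ^ 2 / C) ^ (e - 1) * ⟪y - z, v⟫) _ x :=
    ((hasFDerivAt_radial_rpow (e := e - 1) (hpos x)).const_mul (c * e * (2 / C))).mul hinner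
  rw [hD.fderiv]
  simp only [add_apply, smul_apply, innerSL_apply_apply, smul_eq_mul, real_inner_comm u v,
    sub_sub, one_add_one_eq_two]
  ring

end RadialRpow

open Finset

theorem pd_pd_const_mul_radial_rpow {n : ℕ} {s C : ℝ} (hs : 0 < s) (hC : 0 < C) (c e : ℝ)
    (z x : En n) (p q : Fin n) :
    pd p (fun y => pd q (fun w => c * (s + ‖w - z‖ ^ 2 / C) ^ e) y) x =
      c * e * (e - 1) * (2 / C) ^ 2 * (s + ‖x - z‖ ^ 2 / C) ^ (e - 2) *
          (x p - z p) * (x q - z q) +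
        c * e * (2 / C) * (s + ‖x - z‖ ^ 2 / C) ^ (e - 1) * if p = q then 1 else 0 := by
  simp [pd, fderiv_fderiv_const_mul_radial_rpow_apply c hs hC, EuclideanSpace.inner_single_right,
    eq_comm]

theorem sum_sum_mul_sub_mul_sub_of_radial {ι : Type*} [Fintype ι] {M : ι → ι → ℝ} {x : ι → ℝ}
    (hsymm : ∀ i j, M i j = M j i) (hrad : ∀ i, ∑ j, x j * M i j = 0) (z : ι → ℝ) :
    ∑ p, ∑ q, M p q * (x p - z p) * (x q - z q) = ∑ p, ∑ q, M p q * z p * z q := by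
  have hcol : ∀ q, ∑ p, x p * M p q = 0 := fun q => by
    rw [← hrad q]; exact sum_congr rfl fun p _ => by rw [hsymm]
  have expand : ∀ p q, M p q * (x p - z p) * (x q - z q) =
      M p q * z p * z q + (x p - z p) * (x q * M p q) - z q * (x p * M p q) := fun p q => by ring
  simp only [expand, sum_add_distrib, sum_sub_distrib, ← mul_sum, hrad, mul_zero, add_zero]
  rw [sum_comm (f := fun p q => z q * (x p * M p q))]
  simp only [← mul_sum, hcol, mul_zero, sum_const_zero, sub_zero]

theorem sum_sum_mul_radial_hessian {ι : Type*} [Fintype ι] [DecidableEq ι] {M : ι → ι → ℝ}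
    {x : ι → ℝ} (hsymm : ∀ i j, M i j = M j i) (htr : ∑ j, M j j = 0)
    (hrad : ∀ i, ∑ j, x j * M i j = 0) (z : ι → ℝ) (a b : ℝ) :
    ∑ p, ∑ q, M p q * (a * (x p - z p) * (x q - z q) + b * if p = q then 1 else 0) =
      a * ∑ p, ∑ q, M p q * z p * z q := by
  have hquad := sum_sum_mul_sub_mul_sub_of_radial hsymm hrad z
  simp only [mul_add, sum_add_distrib, mul_ite, mul_one, mul_zero, sum_ite_eq, mem_univ,
    if_true]
  rw [← sum_mul, htr, zero_mul, add_zero, ← hquad, mul_sum]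
  refine sum_congr rfl fun p _ => ?_
  rw [mul_sum]
  exact sum_congr rfl fun q _ => by ring

theorem stmt2 (n : ℕ) (hn : 3 ≤ n) (h : En n → Fin n → Fin n → ℝ)
    -- `h(x)` is a symmetric matrix for every `x`
    (hsymm : ∀ x i j, h x i j = h x j i)
    -- `h` is trace-free
    (htr : ∀ x : En n, ∑ j, h x j j = 0)
    -- `∑_j x_j h_{ij}(x) = 0` for all `x` and `i`
    (hrad : ∀ (x : En n) (i : Fin n), ∑ j, x j * h x i j = 0)
    (t : ℝ) (ht : 0 < t) (z x : En n) :
    ∑ p, ∑ q, h x p q * pd p (fun y => pd q (Bub n t z) y) x =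
      t ^ (((n : ℝ) - 2) / 2) / ((n : ℝ) * ((n : ℝ) - 2)) *
        (∑ p, ∑ q, h x p q * z p * z q) *
        (t ^ 2 + ‖x - z‖ ^ 2 / ((n : ℝ) * ((n : ℝ) - 2))) ^ (-(((n : ℝ) + 2) / 2)) := by
  have hn' : (3 : ℝ) ≤ n := by exact_mod_cast hn
  have hC : 0 < (n : ℝ) * ((n : ℝ) - 2) := by nlinarith
  unfold Bub
  simp_rw [pd_pd_const_mul_radial_rpow (pow_pos ht 2) hC]
  rw [sum_sum_mul_radial_hessian (hsymm x) (htr x) (hrad x),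
    show -(((n : ℝ) - 2) / 2) - 2 = -(((n : ℝ) + 2) / 2) by ring]
  field_simp
  ring
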